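/- Cyclic propagation (Lemma 2): under the cycle setup assumptions, if the delay function d satisfies the strict cyclic delay hypothesis, then the cyclic propagation pattern holds: for every i ≥ 1, writing a = ((i−1) mod n)+1 and b = (i mod n)+1, node v_a transmits to v_b in round c+i, i.e. (v_a, e_a) ∈ r(c+i). -/
import Mathlib


open scoped Classical

/-- The state of a node in the RDAF protocol: message possession `hasMsg`,
source set `src` and destination set `dst`. -/
structure RDAFState (V : Type*) where
  hasMsg : Prop
  src : Set V
  dst : Set V

namespace RDAF

variable {V : Type*}

/-- Initial configuration: the source has the message and destination set `N(g0)`. -/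
noncomputable def init (G : SimpleGraph V) (g0 : V) : V → RDAFState V := fun u =>
  if u = g0 then ⟨True, ∅, G.neighborSet g0⟩ else ⟨False, ∅, ∅⟩

/-- One round of state evolution: from the states at round `j` to the states at round `j+1`,
under delay function `d` (where `d j v e = true` means transmission from `v` along `e` is
blocked in round `j`). -/
noncomputable def step (G : SimpleGraph V) (d : ℕ → V → Sym2 V → Bool) (j : ℕ)
    (st : V → RDAFState V) : V → RDAFState V := fun u =>
  let s' : Set V :=
    {v | G.Adj v u ∧ (st v).hasMsg ∧ u ∈ (st v).dst ∧ d (j + 1) v s(v, u) = false}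
  let t' : Set V :=
    if s'.Nonempty then G.neighborSet u \ s'
    else if (st u).hasMsg then {v | v ∈ (st u).dst ∧ d (j + 1) u s(u, v) = true}
    else ∅
  ⟨s'.Nonempty ∨ t'.Nonempty, s', t'⟩

/-- The state `S(j, u)` of every node `u` at round `j`. -/
noncomputable def stateAt (G : SimpleGraph V) (g0 : V) (d : ℕ → V → Sym2 V → Bool) :
    ℕ → V → RDAFState V
  | 0 => init G g0
  | j + 1 => step G d j (stateAt G g0 d j)

/-- `M j u`: node `u` possesses the message at round `j`. -/
noncomputable def M (G : SimpleGraph V) (g0 : V) (d : ℕ → V → Sym2 V → Bool) (j : ℕ)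
    (u : V) : Prop :=
  (stateAt G g0 d j u).hasMsg

/-- `srcSet j u = s(j, u)`: the source set of node `u` at round `j`. -/
noncomputable def srcSet (G : SimpleGraph V) (g0 : V) (d : ℕ → V → Sym2 V → Bool) (j : ℕ)
    (u : V) : Set V :=
  (stateAt G g0 d j u).src

/-- `destSet j u = dest(j, u)`: the destination set of node `u` at round `j`. -/
noncomputable def destSet (G : SimpleGraph V) (g0 : V) (d : ℕ → V → Sym2 V → Bool) (j : ℕ)
    (u : V) : Set V :=
  (stateAt G g0 d j u).dst

/-- The transmission set `r(j)`: pairs `(v, {v,w})` such that `v` transmits to `w` in round `j`. -/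
noncomputable def trans (G : SimpleGraph V) (g0 : V) (d : ℕ → V → Sym2 V → Bool) :
    ℕ → Set (V × Sym2 V)
  | 0 => ∅
  | j + 1 =>
    {p | ∃ v w : V, p = (v, s(v, w)) ∧ G.Adj v w ∧ M G g0 d j v ∧
      w ∈ destSet G g0 d j v ∧ d (j + 1) v s(v, w) = false}

/-- The configuration `σ(j) = (S(j, ·), r(j))` at round `j`. -/
noncomputable def config (G : SimpleGraph V) (g0 : V) (d : ℕ → V → Sym2 V → Bool) (j : ℕ) :
    (V → RDAFState V) × Set (V × Sym2 V) :=
  (stateAt G g0 d j, trans G g0 d j)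

/-- The finite delay property: every node-edge pair is allowed to transmit infinitely often. -/
def FiniteDelay (G : SimpleGraph V) (d : ℕ → V → Sym2 V → Bool) : Prop :=
  ∀ v : V, ∀ e ∈ G.edgeSet, v ∈ e → ∀ j : ℕ, ∃ j' ≥ j, d j' v e = false

/-- Flooding has terminated by round `t`: no node has the message at round `t`. -/
def TerminatedBy (G : SimpleGraph V) (g0 : V) (d : ℕ → V → Sym2 V → Bool) (t : ℕ) : Prop :=
  ∀ v : V, ¬ M G g0 d t v

/-- Flooding terminates: it has terminated by some round. -/
def Terminates (G : SimpleGraph V) (g0 : V) (d : ℕ → V → Sym2 V → Bool) : Prop :=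
  ∃ t : ℕ, TerminatedBy G g0 d t

/-- A schedule is periodic infinite with parameters `(c, l)`. -/
def PeriodicInfinite (G : SimpleGraph V) (g0 : V) (d : ℕ → V → Sym2 V → Bool)
    (c l : ℕ) : Prop :=
  1 ≤ l ∧ (∀ j : ℕ, c ≤ j → config G g0 d j = config G g0 d (j + l)) ∧
    ∃ k < l, (trans G g0 d (c + k)).Nonempty

end RDAF

namespace RDAF

variable {V : Type*}

/-- The `i`-th edge of the cycle: `e_i = {v_i, v_{(i mod n)+1}}`. -/
def cycEdge (v : ℕ → V) (n : ℕ) (i : ℕ) : Sym2 V := s(v i, v (i % n + 1))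

/-- The cyclic propagation pattern holds for the cycle `v_1, …, v_n` starting from round `c`:
for every `i ≥ 1`, writing `a = ((i-1) mod n) + 1`, node `v_a` transmits along `e_a`
in round `c + i`. -/
def CyclicPattern (G : SimpleGraph V) (g0 : V) (d : ℕ → V → Sym2 V → Bool)
    (n : ℕ) (v : ℕ → V) (c : ℕ) : Prop :=
  ∀ i : ℕ, 1 ≤ i →
    (v ((i - 1) % n + 1), cycEdge v n ((i - 1) % n + 1)) ∈ RDAF.trans G g0 d (c + i)

/-- The disruption condition: for some `k ∈ {1,…,n}` and some round `j`, writing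
`b = (k mod n) + 1`, node `v_b` transmits to `v_k` along `e_k` in round `j`, node `v_k`
possesses the message before that round, and `v_k` has not transmitted to `v_b` by round `j`. -/
def Disruption (G : SimpleGraph V) (g0 : V) (d : ℕ → V → Sym2 V → Bool)
    (n : ℕ) (v : ℕ → V) (c : ℕ) : Prop :=
  ∃ k ∈ Finset.Icc 1 n, ∃ j : ℕ,
    (v (k % n + 1), cycEdge v n k) ∈ RDAF.trans G g0 d j ∧
    RDAF.M G g0 d (j - 1) (v k) ∧
    ∀ j' ≤ j, (v k, cycEdge v n k) ∉ RDAF.trans G g0 d j'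

end RDAF

namespace RDAF

variable {V : Type*}

private lemma mem_srcSet_succ {G : SimpleGraph V} {g0 : V} {d : ℕ → V → Sym2 V → Bool}
    {j : ℕ} {u w : V} :
    w ∈ srcSet G g0 d (j + 1) u ↔
      G.Adj w u ∧ M G g0 d j w ∧ u ∈ destSet G g0 d j w ∧ d (j + 1) w s(w, u) = false :=
  Iff.rfl

private lemma destSet_succ (G : SimpleGraph V) (g0 : V) (d : ℕ → V → Sym2 V → Bool)
    (j : ℕ) (u : V) :
    destSet G g0 d (j + 1) u =
      if (srcSet G g0 d (j + 1) u).Nonempty then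
        G.neighborSet u \ srcSet G g0 d (j + 1) u
      else if M G g0 d j u then {w | w ∈ destSet G g0 d j u ∧ d (j + 1) u s(u, w) = true}
      else ∅ :=
  rfl

private lemma mem_trans_succ {G : SimpleGraph V} {g0 : V} {d : ℕ → V → Sym2 V → Bool}
    {j : ℕ} {p : V × Sym2 V} :
    p ∈ trans G g0 d (j + 1) ↔ ∃ a b : V, p = (a, s(a, b)) ∧ G.Adj a b ∧ M G g0 d j a ∧
      b ∈ destSet G g0 d j a ∧ d (j + 1) a s(a, b) = false :=
  Iff.rfl

private lemma mod_succ_idx {n : ℕ} (hn : 3 ≤ n) (i : ℕ) : (i % n + 1) % n = (i + 1) % n := by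
  conv_rhs => rw [Nat.add_mod, Nat.mod_eq_of_lt (show 1 < n by omega)]

private lemma mod_add_ne {n k : ℕ} (hk0 : 0 < k) (hkn : k < n) (i : ℕ) :
    i % n ≠ (i + k) % n := by
  intro h
  have hdvd : n ∣ k := by
    have h2 := (Nat.modEq_iff_dvd' (Nat.le_add_right i k)).1 h
    simpa using h2
  have := Nat.le_of_dvd hk0 hdvd
  omega

private lemma mod_cases {n k : ℕ} (hk1 : 1 ≤ k) (hk2 : k ≤ n) :
    k % n = k ∨ k = n ∧ k % n = 0 := by
  rcases Nat.lt_or_ge k n with h1 | h1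
  · exact Or.inl (Nat.mod_eq_of_lt h1)
  · have hkn : k = n := le_antisymm hk2 h1
    exact Or.inr ⟨hkn, by simp [hkn]⟩

private lemma idx_unique {n k a : ℕ} (hn : 3 ≤ n) (hk1 : 1 ≤ k) (hk2 : k ≤ n)
    (ha1 : 1 ≤ a) (ha2 : a ≤ n) (h : (k : ℤ) ≡ (a : ℤ) [ZMOD (n : ℤ)]) : k = a := by
  have h' : (k : ℤ) % (n : ℤ) = (a : ℤ) % (n : ℤ) := h
  have hmod : k % n = a % n := by exact_mod_cast h'
  have h1 := mod_cases hk1 hk2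
  have h2 := mod_cases ha1 ha2
  omega

private lemma round_cong (n c i : ℕ) :
    ((c + i + 1 : ℕ) : ℤ) ≡ (c : ℤ) + ((i % n + 1 : ℕ) : ℤ) [ZMOD (n : ℤ)] := by
  refine Int.ModEq.symm (Int.modEq_iff_dvd.2 ⟨((i / n : ℕ) : ℤ), ?_⟩)
  have h : (n : ℤ) * ((i / n : ℕ) : ℤ) + ((i % n : ℕ) : ℤ) = (i : ℤ) := by
    exact_mod_cast Nat.div_add_mod i n
  push_cast at h ⊢
  linarith

end RDAF

/-- **Cyclic propagation (Lemma 2).** Under the cycle setup assumptions, if the delay function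
satisfies the strict cyclic delay hypothesis, then the cyclic propagation pattern holds. -/
theorem RDAF.cyclic_propagation
    {V : Type*} (G : SimpleGraph V) (g0 : V) (d : ℕ → V → Sym2 V → Bool)
    (n : ℕ) (v : ℕ → V) (c : ℕ)
    (hn : 3 ≤ n)
    (hdistinct : ∀ i ∈ Finset.Icc 1 n, ∀ k ∈ Finset.Icc 1 n, v i = v k → i = k)
    (hadj : ∀ i ∈ Finset.Icc 1 n, G.Adj (v i) (v (i % n + 1)))
    (hsilent : ∀ i ∈ Finset.Icc 1 n, ∀ j < c, RDAF.srcSet G g0 d j (v i) = ∅)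
    (hrecv : (RDAF.srcSet G g0 d c (v 1)).Nonempty)
    (hnotv2 : v 2 ∉ RDAF.srcSet G g0 d c (v 1))
    (hstrict : ∀ j : ℕ, ∀ e ∈ G.edgeSet, (∃ i ∈ Finset.Icc 1 n, v i ∈ e) → ∀ u ∈ e,
      (d j u e = false ↔ ∃ i ∈ Finset.Icc 1 n, e = RDAF.cycEdge v n i ∧
        (j : ℤ) ≡ (c : ℤ) + (i : ℤ) [ZMOD (n : ℤ)])) :
    RDAF.CyclicPattern G g0 d n v c := by
  classical
  have h1n : 1 % n = 1 := Nat.mod_eq_of_lt (by omega)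
  have memIcc : ∀ i : ℕ, i % n + 1 ∈ Finset.Icc 1 n := by
    intro i
    have := Nat.mod_lt i (show 0 < n by omega)
    simp only [Finset.mem_Icc]
    omega
  -- c ≥ 1
  obtain ⟨c', rfl⟩ : ∃ c', c = c' + 1 := by
    cases c with
    | zero =>
        exfalso
        obtain ⟨x, hx⟩ := hrecv
        simp only [RDAF.srcSet, RDAF.stateAt, RDAF.init] at hx
        split at hx <;> simp at hx
    | succ m => exact ⟨m, rfl⟩
  set c : ℕ := c' + 1 with hc
  -- the delay is false exactly on the right cycle edge at the right time
  have hd_false : ∀ i : ℕ, d (c + i + 1) (v (i % n + 1)) (cycEdge v n (i % n + 1)) = false := by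
    intro i
    have hae : cycEdge v n (i % n + 1) ∈ G.edgeSet := G.mem_edgeSet.2 (hadj _ (memIcc i))
    have hmemL : v (i % n + 1) ∈ cycEdge v n (i % n + 1) := Sym2.mem_mk_left _ _
    exact (hstrict (c + i + 1) _ hae ⟨_, memIcc i, hmemL⟩ _ hmemL).2
      ⟨_, memIcc i, rfl, round_cong n c i⟩
  -- transmission lemma
  have htrans : ∀ i : ℕ, M G g0 d (c + i) (v (i % n + 1)) →
      v ((i + 1) % n + 1) ∈ destSet G g0 d (c + i) (v (i % n + 1)) →
      (v (i % n + 1), cycEdge v n (i % n + 1)) ∈ trans G g0 d (c + i + 1) := by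
    intro i hM hdst
    refine mem_trans_succ.2 ⟨v (i % n + 1), v ((i % n + 1) % n + 1), rfl,
      hadj _ (memIcc i), hM, ?_, ?_⟩
    · rw [mod_succ_idx hn]; exact hdst
    · exact hd_false i
  -- main invariant by induction
  have main : ∀ i : ℕ, M G g0 d (c + i) (v (i % n + 1)) ∧
      v ((i + 1) % n + 1) ∈ destSet G g0 d (c + i) (v (i % n + 1)) := by
    intro i
    induction i with
    | zero =>
        have h2 : (0 + 1) % n + 1 = 2 := by rw [Nat.zero_add, h1n]
        simp only [Nat.add_zero, Nat.zero_mod, Nat.zero_add, h2]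
        constructor
        · exact Or.inl hrecv
        · rw [destSet_succ, if_pos hrecv]
          refine ⟨?_, hnotv2⟩
          have := hadj 1 (by simp only [Finset.mem_Icc]; omega)
          rw [h1n] at this
          exact this
    | succ i ih =>
        have hab : (i % n + 1) % n + 1 = (i + 1) % n + 1 := by rw [mod_succ_idx hn]
        have hadj_ab : G.Adj (v (i % n + 1)) (v ((i + 1) % n + 1)) := by
          have := hadj _ (memIcc i); rwa [hab] at this
        have hsrc_mem : v (i % n + 1) ∈ srcSet G g0 d (c + i + 1) (v ((i + 1) % n + 1)) := by
          refine mem_srcSet_succ.2 ⟨hadj_ab, ih.1, ih.2, ?_⟩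
          have := hd_false i
          rw [RDAF.cycEdge, hab] at this
          exact this
        have hne : (srcSet G g0 d (c + i + 1) (v ((i + 1) % n + 1))).Nonempty := ⟨_, hsrc_mem⟩
        have hsub : ∀ w ∈ srcSet G g0 d (c + i + 1) (v ((i + 1) % n + 1)), w = v (i % n + 1) := by
          intro w hw
          obtain ⟨hAdj, -, -, hd⟩ := mem_srcSet_succ.1 hw
          have hE : s(w, v ((i + 1) % n + 1)) ∈ G.edgeSet := G.mem_edgeSet.2 hAdj
          obtain ⟨k, hk, hek, hcong⟩ := (hstrict (c + i + 1) _ hE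
            ⟨_, memIcc (i + 1), Sym2.mem_mk_right _ _⟩ w (Sym2.mem_mk_left _ _)).1 hd
          have hkicc := Finset.mem_Icc.1 hk
          have haicc := Finset.mem_Icc.1 (memIcc i)
          have hka : k = i % n + 1 := by
            refine idx_unique hn hkicc.1 hkicc.2 haicc.1 haicc.2 ?_
            have h2 := (round_cong n c i).symm.trans hcong
            exact (Int.ModEq.add_left_cancel' (c : ℤ) h2).symm
          subst hka
          rw [RDAF.cycEdge, hab] at hek
          rcases Sym2.eq_iff.1 hek with ⟨hw1, -⟩ | ⟨-, hw2⟩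
          · exact hw1
          · exfalso
            have := hdistinct _ (memIcc (i + 1)) _ (memIcc i) hw2
            have hne' : i % n ≠ (i + 1) % n := mod_add_ne (by omega) (by omega) i
            omega
        refine ⟨Or.inl hne, ?_⟩
        show v ((i + 1 + 1) % n + 1) ∈ destSet G g0 d (c + i + 1) (v ((i + 1) % n + 1))
        rw [destSet_succ, if_pos hne]
        refine ⟨?_, ?_⟩
        · have := hadj _ (memIcc (i + 1))
          rw [mod_succ_idx hn (i + 1)] at this
          exact this
        · intro hmem
          have heq := hsub _ hmem
          have := hdistinct _ (memIcc (i + 2)) _ (memIcc i) heq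
          have hne' : i % n ≠ (i + 2) % n := mod_add_ne (by omega) (by omega) i
          omega
  -- conclude
  intro i hi
  obtain ⟨j, rfl⟩ : ∃ j, i = j + 1 := ⟨i - 1, by omega⟩
  have hj : j + 1 - 1 = j := rfl
  rw [hj]
  exact htrans j (main j).1 (main j).2
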